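/- arXiv:1902.04650 — 3 statements merged into one kernel-verified Lean document; each statement's English description precedes it below -/
import Mathlib

section
/- In the adversarial contamination setup, for every triple of positive integers (k,s,n) with 1 ≤ s ≤ k and every ε ∈ [0,1], the sample mean satisfies E[d_TV(X̄_n, θ*)] ≤ (s/n)^{1/2} + 2ε. -/
/-!
By the triangle inequality, `d_TV(X̄, θ*) ≤ d_TV(X̄, Ȳ) + d_TV(Ȳ, θ*)`. Replacing one sample
point moves the sample mean by at most `1/n` in total variation, so the first term is at most `ε`.
For the clean term, each coordinate satisfies
`E|Ȳ_j - θ*_j| ≤ √(Var Y_{1j} / n) ≤ √(θ*_j / n)` (Bhatia–Davis for a `[0,1]`-valued variable),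
and Cauchy–Schwarz over the at most `s` nonzero coordinates of `θ*` gives `∑ j, √θ*_j ≤ √s`.
-/

open MeasureTheory ProbabilityTheory

noncomputable section

/-- The probability simplex `Δ^{k-1}` in `ℝ^k`. -/
def simplex (k : ℕ) : Set (Fin k → ℝ) :=
  {v | (∀ j, 0 ≤ v j) ∧ ∑ j, v j = 1}

/-- `v` has at most `s` nonzero coordinates. -/
def sparse {k : ℕ} (s : ℕ) (v : Fin k → ℝ) : Prop :=
  (Finset.univ.filter fun j => v j ≠ 0).card ≤ s

/-- Total variation distance between two points of the simplex. -/
def dTV {k : ℕ} (u v : Fin k → ℝ) : ℝ := (1 / 2) * ∑ j, |u j - v j|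

open Finset

def sampleMean {n k : ℕ} (x : Fin n → Fin k → ℝ) : Fin k → ℝ :=
  fun j => (1 / n : ℝ) * ∑ i, x i j

lemma le_one_of_mem_simplex {k : ℕ} {v : Fin k → ℝ} (hv : v ∈ simplex k) (j : Fin k) :
    v j ≤ 1 :=
  hv.2 ▸ single_le_sum (fun i _ => hv.1 i) (mem_univ j)

lemma sampleMean_mem_simplex {n k : ℕ} (hn : n ≠ 0) {x : Fin n → Fin k → ℝ}
    (hx : ∀ i, x i ∈ simplex k) : sampleMean x ∈ simplex k := by
  refine ⟨fun j => mul_nonneg (by positivity) (sum_nonneg fun i _ => (hx i).1 j), ?_⟩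
  simp only [sampleMean, ← mul_sum]
  rw [sum_comm, sum_congr rfl fun i _ => (hx i).2]
  simp [hn]

lemma dTV_nonneg {k : ℕ} (u v : Fin k → ℝ) : 0 ≤ dTV u v := by
  unfold dTV
  positivity

@[simp]
lemma dTV_self {k : ℕ} (u : Fin k → ℝ) : dTV u u = 0 := by
  simp [dTV]

lemma dTV_le_one {k : ℕ} {u v : Fin k → ℝ} (hu : u ∈ simplex k) (hv : v ∈ simplex k) :
    dTV u v ≤ 1 := by
  have : ∑ j, |u j - v j| ≤ ∑ j, (u j + v j) :=
    sum_le_sum fun j _ =>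
      abs_le.mpr ⟨by linarith [hu.1 j, hv.1 j], by linarith [hu.1 j, hv.1 j]⟩
  rw [sum_add_distrib, hu.2, hv.2] at this
  unfold dTV
  linarith

lemma dTV_triangle {k : ℕ} (u v w : Fin k → ℝ) : dTV u w ≤ dTV u v + dTV v w := by
  unfold dTV
  rw [← mul_add, ← sum_add_distrib]
  gcongr with j
  exact abs_sub_le _ _ _

lemma dTV_sampleMean_le {n k : ℕ} (x y : Fin n → Fin k → ℝ) :
    dTV (sampleMean x) (sampleMean y) ≤ (1 / n : ℝ) * ∑ i, dTV (x i) (y i) := by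
  have hdiff (j : Fin k) :
      sampleMean x j - sampleMean y j = (1 / n : ℝ) * ∑ i, (x i j - y i j) := by
    simp only [sampleMean, sum_sub_distrib, mul_sub]
  simp only [dTV, hdiff, abs_mul, abs_of_nonneg (by positivity : (0 : ℝ) ≤ 1 / n), ← mul_sum]
  rw [mul_left_comm]
  gcongr
  rw [sum_comm]
  exact sum_le_sum fun j _ => abs_sum_le_sum_abs _ _

lemma dTV_sampleMean_le_card {n k : ℕ} {x y : Fin n → Fin k → ℝ}
    (hx : ∀ i, x i ∈ simplex k) (hy : ∀ i, y i ∈ simplex k) :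
    dTV (sampleMean x) (sampleMean y) ≤ (#{i | x i ≠ y i} : ℝ) / n := by
  have hcard : ∑ i, dTV (x i) (y i) ≤ #{i | x i ≠ y i} := by
    rw [card_filter, Nat.cast_sum]
    refine sum_le_sum fun i _ => ?_
    split_ifs with hne
    · simpa using dTV_le_one (hx i) (hy i)
    · simp [not_not.mp hne]
  calc dTV (sampleMean x) (sampleMean y) ≤ (1 / n : ℝ) * ∑ i, dTV (x i) (y i) :=
        dTV_sampleMean_le x y
    _ ≤ (1 / n : ℝ) * #{i | x i ≠ y i} := by gcongr
    _ = (#{i | x i ≠ y i} : ℝ) / n := one_div_mul_eq_div _ _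

lemma sum_sqrt_le_sqrt_card_mul_sum {ι : Type*} [Fintype ι] {v : ι → ℝ}
    (hv : ∀ i, 0 ≤ v i) :
    ∑ i, √(v i) ≤ √(#{i | v i ≠ 0} * ∑ i, v i) := by
  rw [← sum_filter_of_ne (s := univ) (f := fun i => √(v i)) (p := fun i => v i ≠ 0)
    fun i _ h hi => h (by simp [hi])]
  apply Real.le_sqrt_of_sq_le
  calc (∑ i with v i ≠ 0, √(v i)) ^ 2
      ≤ #{i | v i ≠ 0} * ∑ i with v i ≠ 0, √(v i) ^ 2 := sq_sum_le_card_mul_sum_sq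
    _ ≤ #{i | v i ≠ 0} * ∑ i, v i := by
        simp only [Real.sq_sqrt (hv _)]
        exact mul_le_mul_of_nonneg_left
          (sum_le_sum_of_subset_of_nonneg (subset_univ _) fun i _ _ => hv i) (by positivity)

lemma sum_sqrt_le_sqrt_of_sparse {k s : ℕ} {v : Fin k → ℝ} (hv : v ∈ simplex k)
    (hs : sparse s v) : ∑ j, √(v j) ≤ √s := by
  refine (sum_sqrt_le_sqrt_card_mul_sum hv.1).trans (Real.sqrt_le_sqrt ?_)
  rw [hv.2, mul_one]
  exact_mod_cast hs

section Probability

variable {Ω : Type*} [MeasurableSpace Ω] {μ : Measure Ω} [IsProbabilityMeasure μ]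

lemma integral_abs_sub_integral_le_sqrt_variance {X : Ω → ℝ} (hX : MemLp X 2 μ) :
    ∫ ω, |X ω - μ[X]| ∂μ ≤ √(Var[X; μ]) := by
  have hdev : MemLp (fun ω => |X ω - μ[X]|) 2 μ := (hX.sub (memLp_const _)).abs
  have hsq : (∫ ω, |X ω - μ[X]| ∂μ) ^ 2 ≤ ∫ ω, |X ω - μ[X]| ^ 2 ∂μ := by
    have := variance_nonneg (fun ω => |X ω - μ[X]|) μ
    rw [variance_eq_sub hdev] at this
    simpa using this
  rw [variance_eq_integral hX.aemeasurable]
  simpa only [sq_abs] using Real.le_sqrt_of_sq_le hsq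

lemma integral_abs_sum_sub_le_sqrt_sum_variance {ι : Type*} [Fintype ι] {X : ι → Ω → ℝ}
    (hX : ∀ i, MemLp (X i) 2 μ) (hindep : iIndepFun X μ) :
    ∫ ω, |∑ i, X i ω - ∑ i, μ[X i]| ∂μ ≤ √(∑ i, Var[X i; μ]) := by
  have hsum : MemLp (∑ i, X i) 2 μ := memLp_finsetSum' _ fun i _ => hX i
  rw [← IndepFun.variance_sum (fun i _ => hX i) fun i _ j _ hij => hindep.indepFun hij,
    ← integral_finsetSum _ fun i _ => (hX i).integrable one_le_two]
  simpa using integral_abs_sub_integral_le_sqrt_variance hsum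

lemma integral_abs_sampleMean_sub_le {n : ℕ} (hn : n ≠ 0) {X : Fin n → Ω → ℝ}
    (hXmeas : ∀ i, Measurable (X i)) (hindep : iIndepFun X μ)
    (hX : ∀ i ω, X i ω ∈ Set.Icc 0 1) {t : ℝ} (hmean : ∀ i, μ[X i] = t) :
    ∫ ω, |(1 / n : ℝ) * ∑ i, X i ω - t| ∂μ ≤ √(t / n) := by
  have hL i : MemLp (X i) 2 μ :=
    memLp_of_bounded (ae_of_all μ (hX i)) (hXmeas i).aestronglyMeasurable 2
  have hvar i : Var[X i; μ] ≤ t := by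
    have := variance_le_sub_mul_sub (ae_of_all μ (hX i)) (hXmeas i).aemeasurable
    rw [hmean i] at this
    nlinarith [sq_nonneg t]
  have hn' : (0 : ℝ) < n := by positivity
  have hcenter ω :
      (1 / n : ℝ) * ∑ i, X i ω - t = (1 / n : ℝ) * (∑ i, X i ω - ∑ i, μ[X i]) := by
    simp only [hmean, sum_const, card_univ, Fintype.card_fin, nsmul_eq_mul]
    field_simp
  calc ∫ ω, |(1 / n : ℝ) * ∑ i, X i ω - t| ∂μ
      = (1 / n : ℝ) * ∫ ω, |∑ i, X i ω - ∑ i, μ[X i]| ∂μ := by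
        simp only [hcenter, abs_mul, abs_of_pos (one_div_pos.mpr hn'), integral_const_mul]
    _ ≤ (1 / n : ℝ) * √(∑ i, Var[X i; μ]) := by
        gcongr
        exact integral_abs_sum_sub_le_sqrt_sum_variance hL hindep
    _ ≤ (1 / n : ℝ) * √(n * t) := by
        gcongr
        exact (sum_le_sum fun i _ => hvar i).trans_eq (by simp)
    _ = √(t / n) := by
        rw [Real.sqrt_mul hn'.le, Real.sqrt_div' _ hn'.le]
        field_simp
        rw [Real.sq_sqrt hn'.le]

end Probability

section Risk

variable {Ω : Type*} [MeasurableSpace Ω] {μ : Measure Ω} [IsProbabilityMeasure μ]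
  {n k : ℕ} {θ : Fin k → ℝ}

lemma integrable_dTV_sampleMean (hn : n ≠ 0) {X : Fin n → Ω → Fin k → ℝ}
    (hXmeas : ∀ i, Measurable (X i)) (hXval : ∀ i ω, X i ω ∈ simplex k)
    (hθ : θ ∈ simplex k) :
    Integrable (fun ω => dTV (sampleMean fun i => X i ω) θ) μ := by
  refine .of_bound (by unfold dTV sampleMean; fun_prop) 1 (ae_of_all μ fun ω => ?_)
  rw [Real.norm_of_nonneg (dTV_nonneg _ _)]
  exact dTV_le_one (sampleMean_mem_simplex hn (hXval · ω)) hθ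

lemma integral_dTV_sampleMean_le {s : ℕ} (hn : n ≠ 0) {Y : Fin n → Ω → Fin k → ℝ}
    (hYmeas : ∀ i, Measurable (Y i)) (hindep : iIndepFun Y μ)
    (hYval : ∀ i ω, Y i ω ∈ simplex k) (hθ : θ ∈ simplex k) (hθs : sparse s θ)
    (hmean : ∀ i j, ∫ ω, Y i ω j ∂μ = θ j) :
    ∫ ω, dTV (sampleMean fun i => Y i ω) θ ∂μ ≤ √(s / n) / 2 := by
  have hcoord j : ∫ ω, |sampleMean (fun i => Y i ω) j - θ j| ∂μ ≤ √(θ j / n) :=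
    integral_abs_sampleMean_sub_le hn (fun i => (measurable_pi_apply j).comp (hYmeas i))
      (hindep.comp _ fun _ => measurable_pi_apply j)
      (fun i ω => ⟨(hYval i ω).1 j, le_one_of_mem_simplex (hYval i ω) j⟩) (hmean · j)
  have hint j : Integrable (fun ω => |sampleMean (fun i => Y i ω) j - θ j|) μ := by
    refine .of_bound (by unfold sampleMean; fun_prop) 1 (ae_of_all μ fun ω => ?_)
    have hYbar := sampleMean_mem_simplex hn (hYval · ω)
    rw [Real.norm_eq_abs, abs_abs]
    exact abs_sub_le_of_nonneg_of_le (hYbar.1 j) (le_one_of_mem_simplex hYbar j) (hθ.1 j)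
      (le_one_of_mem_simplex hθ j)
  have hn' : (0 : ℝ) ≤ n := n.cast_nonneg
  calc ∫ ω, dTV (sampleMean fun i => Y i ω) θ ∂μ
      = 1 / 2 * ∑ j, ∫ ω, |sampleMean (fun i => Y i ω) j - θ j| ∂μ := by
        simp only [dTV]
        rw [integral_const_mul, integral_finsetSum _ fun j _ => hint j]
    _ ≤ 1 / 2 * ∑ j, √(θ j / n) := by gcongr with j; exact hcoord j
    _ = 1 / 2 * ((∑ j, √(θ j)) / √n) := by simp only [Real.sqrt_div' _ hn', sum_div]
    _ ≤ 1 / 2 * (√s / √n) := by gcongr; exact sum_sqrt_le_sqrt_of_sparse hθ hθs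
    _ = √(s / n) / 2 := by rw [Real.sqrt_div' _ hn']; ring

end Risk

theorem sample_mean_TV_risk_adversarial_general
    {Ω : Type} [MeasurableSpace Ω] (μ : Measure Ω) [IsProbabilityMeasure μ]
    (k s n : ℕ) (hn : 1 ≤ n)
    (ε : ℝ) (hε0 : 0 ≤ ε)
    (Y X : Fin n → Ω → Fin k → ℝ)
    (hYmeas : ∀ i, Measurable (Y i)) (hXmeas : ∀ i, Measurable (X i))
    (hYindep : iIndepFun Y μ)
    (hYval : ∀ i ω, Y i ω ∈ simplex k)
    (hXval : ∀ i ω, X i ω ∈ simplex k)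
    (θ : Fin k → ℝ) (hθ : θ ∈ simplex k) (hθsparse : sparse s θ)
    (hθmean : ∀ i j, ∫ ω, Y i ω j ∂μ = θ j)
    (hcontam : ∀ᵐ ω ∂μ,
      ((Finset.univ.filter fun i => X i ω ≠ Y i ω).card : ℝ) ≤ ε * n) :
    ∫ ω, dTV (fun j => (1 / n : ℝ) * ∑ i, X i ω j) θ ∂μ ≤
      Real.sqrt (s / n) + 2 * ε := by
  have hn0 : n ≠ 0 := Nat.one_le_iff_ne_zero.mp hn
  have hcontam_dTV : ∀ᵐ ω ∂μ, dTV (sampleMean fun i => X i ω) θ ≤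
      dTV (sampleMean fun i => Y i ω) θ + ε := by
    filter_upwards [hcontam] with ω hω
    have hshift := dTV_sampleMean_le_card (hXval · ω) (hYval · ω)
    have hfrac : (#{i | X i ω ≠ Y i ω} : ℝ) / n ≤ ε :=
      (div_le_iff₀ (by positivity)).mpr hω
    linarith [dTV_triangle (sampleMean fun i => X i ω) (sampleMean fun i => Y i ω) θ]
  calc ∫ ω, dTV (sampleMean fun i => X i ω) θ ∂μ
      ≤ ∫ ω, (dTV (sampleMean fun i => Y i ω) θ + ε) ∂μ :=
        integral_mono_ae (integrable_dTV_sampleMean hn0 hXmeas hXval hθ)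
          ((integrable_dTV_sampleMean hn0 hYmeas hYval hθ).add (integrable_const ε)) hcontam_dTV
    _ = ∫ ω, dTV (sampleMean fun i => Y i ω) θ ∂μ + ε := by
        rw [integral_add (integrable_dTV_sampleMean hn0 hYmeas hYval hθ) (integrable_const ε)]
        simp
    _ ≤ √(s / n) / 2 + ε := by
        gcongr
        exact integral_dTV_sampleMean_le hn0 hYmeas hYindep hYval hθ hθsparse hθmean
    _ ≤ √(s / n) + 2 * ε := by linarith [Real.sqrt_nonneg (s / n)]

/-- In the adversarial contamination setup, the sample mean satisfies
`E[d_TV(X̄_n, θ*)] ≤ (s/n)^{1/2} + 2ε`. -/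
theorem sample_mean_TV_risk_adversarial
    {Ω : Type} [MeasurableSpace Ω] (μ : Measure Ω) [IsProbabilityMeasure μ]
    (k s n : ℕ) (hk : 1 ≤ k) (hs1 : 1 ≤ s) (hsk : s ≤ k) (hn : 1 ≤ n)
    (ε : ℝ) (hε0 : 0 ≤ ε) (hε1 : ε ≤ 1)
    (Y X : Fin n → Ω → Fin k → ℝ)
    (hYmeas : ∀ i, Measurable (Y i)) (hXmeas : ∀ i, Measurable (X i))
    (hYindep : iIndepFun Y μ)
    (hYid : ∀ i j, IdentDistrib (Y i) (Y j) μ μ)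
    (hYval : ∀ i ω, Y i ω ∈ simplex k)
    (hXval : ∀ i ω, X i ω ∈ simplex k)
    (θ : Fin k → ℝ) (hθ : θ ∈ simplex k) (hθsparse : sparse s θ)
    (hθmean : ∀ i j, ∫ ω, Y i ω j ∂μ = θ j)
    (hcontam : ∀ᵐ ω ∂μ,
      ((Finset.univ.filter fun i => X i ω ≠ Y i ω).card : ℝ) ≤ ε * n) :
    ∫ ω, dTV (fun j => (1 / n : ℝ) * ∑ i, X i ω j) θ ∂μ ≤
      Real.sqrt (s / n) + 2 * ε :=
  sample_mean_TV_risk_adversarial_general μ k s n hn ε hε0 Y X hYmeas hXmeas hYindep hYval hXval θ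
    hθ hθsparse hθmean hcontam
end
end

section
/- For every measurable estimator θ̂_n : 𝒳^n → Θ, every θ* ∈ Θ, and every ε ∈ (0,1/2): R^{HC}_{d,n}(ε, θ*, θ̂_n) ≤ R^{HDC}_{d,n}(2ε, θ*, θ̂_n) + e^{−nε/3} · R^{HDC}_{d,n}(1, θ*, θ̂_n). -/
open MeasureTheory ProbabilityTheory
open scoped ENNReal

noncomputable section

/-- Huber's contamination model `M_n^{HC}(ε, θ*)`: the joint laws of `n` i.i.d.
observations drawn from the mixture `(1-ε)·P_{θ*} + ε·Q` for some probability
measure `Q`. -/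
def huberHC {𝒳 : Type*} [MeasurableSpace 𝒳] (n : ℕ) (ε : ℝ) (Pstar : Measure 𝒳) :
    Set (Measure (Fin n → 𝒳)) :=
  {μn | ∃ Q : Measure 𝒳, IsProbabilityMeasure Q ∧
    μn = Measure.pi fun _ => (ENNReal.ofReal (1 - ε) • Pstar + ENNReal.ofReal ε • Q)}

/-- Huber's deterministic contamination model `M_n^{HDC}(ε, θ*)`: the joint laws of
`n` independent observations which follow `P_{θ*}` outside a deterministic set `O`
with `|O| ≤ εn` and some probability measure `Q` on `O`. -/
def huberHDC {𝒳 : Type*} [MeasurableSpace 𝒳] (n : ℕ) (ε : ℝ) (Pstar : Measure 𝒳) :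
    Set (Measure (Fin n → 𝒳)) :=
  {μn | ∃ O : Finset (Fin n), (O.card : ℝ) ≤ ε * n ∧
    ∃ Q : Measure 𝒳, IsProbabilityMeasure Q ∧
      μn = Measure.pi fun i => if i ∈ O then Q else Pstar}

/-- Worst-case risk of an estimator `est` over a contamination model, the quality of
estimation being measured by the pseudometric `edist` of `Θ`. -/
def risk {𝒳 Θ : Type*} [MeasurableSpace 𝒳] [PseudoEMetricSpace Θ] {n : ℕ}
    (model : Set (Measure (Fin n → 𝒳))) (est : (Fin n → 𝒳) → Θ) (θ : Θ) : ℝ≥0∞ :=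
  ⨆ μn ∈ model, ∫⁻ x, edist (est x) θ ∂μn

/-!
Split the `n` observations of the Huber model according to which of them were contaminated:
the product of the mixture `(1-ε)P + εQ` is the binomial mixture, over subsets `S`, of the
products contaminated exactly on `S`. Each of these lies in the deterministic model with
`|S|` outliers, hence in `M^{HDC}(2ε)` when `|S| ≤ 2εn` and in `M^{HDC}(1)` always. The binomial
weight of `|S| > 2εn` is at most `e^{-nε/3}` by the exponential Markov inequality with tilt
`log 2`, since `2^{-2εn}(1+ε)^n ≤ e^{(1 - 2 log 2)nε}` and `2 log 2 - 1 ≥ 1/3`.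
-/

open Finset

theorem Finset.sum_filter_le_card_pow_mul_pow_le_exp_mul (ι : Type*) [Fintype ι] {x y t m : ℝ}
    (hx : 0 ≤ x) (hy : 0 ≤ y) (ht : 0 ≤ t) :
    ∑ S : Finset ι with m ≤ #S, x ^ #S * y ^ (Fintype.card ι - #S) ≤
      Real.exp (-(t * m)) * (Real.exp t * x + y) ^ Fintype.card ι := by
  rw [← Fintype.sum_pow_mul_eq_add_pow, mul_sum]
  refine (sum_le_sum fun S (hS : S ∈ filter _ _) => ?_).trans
    (sum_le_sum_of_subset_of_nonneg (filter_subset _ _) fun _ _ _ => by positivity)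
  have tilt : 1 ≤ Real.exp (-(t * m)) * Real.exp t ^ #S := by
    rw [← Real.exp_nat_mul, ← Real.exp_add]
    exact Real.one_le_exp (by nlinarith [(mem_filter.1 hS).2])
  calc x ^ #S * y ^ (Fintype.card ι - #S)
      ≤ Real.exp (-(t * m)) * Real.exp t ^ #S * (x ^ #S * y ^ (Fintype.card ι - #S)) :=
        le_mul_of_one_le_left (by positivity) tilt
    _ = _ := by ring

theorem Finset.sum_filter_two_mul_card_lt_pow_mul_pow_le_exp (ι : Type*) [Fintype ι] {ε : ℝ}
    (hε0 : 0 ≤ ε) (hε1 : ε ≤ 1) :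
    ∑ S : Finset ι with 2 * ε * Fintype.card ι < #S,
        ε ^ #S * (1 - ε) ^ (Fintype.card ι - #S) ≤
      Real.exp (-(Fintype.card ι * ε) / 3) := by
  set N := Fintype.card ι
  have h1ε : 0 ≤ 1 - ε := by linarith
  have hlog : 2 / 3 ≤ Real.log 2 := by linarith [Real.log_two_gt_d9]
  have hNε : 0 ≤ N * ε := by positivity
  calc ∑ S : Finset ι with 2 * ε * N < #S, ε ^ #S * (1 - ε) ^ (N - #S)
      ≤ ∑ S : Finset ι with 2 * ε * N ≤ #S, ε ^ #S * (1 - ε) ^ (N - #S) :=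
        sum_le_sum_of_subset_of_nonneg (monotone_filter_right _ fun _ _ => le_of_lt)
          fun _ _ _ => by positivity
    _ ≤ Real.exp (-(Real.log 2 * (2 * ε * N))) *
          (Real.exp (Real.log 2) * ε + (1 - ε)) ^ N :=
        sum_filter_le_card_pow_mul_pow_le_exp_mul ι hε0 h1ε (Real.log_nonneg one_le_two)
    _ ≤ Real.exp (-(Real.log 2 * (2 * ε * N))) * Real.exp (N * ε) := by
        rw [Real.exp_log two_pos, Real.exp_nat_mul]
        gcongr
        linarith [Real.add_one_le_exp ε]
    _ ≤ Real.exp (-(N * ε) / 3) := by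
        rw [← Real.exp_add]
        gcongr
        nlinarith

theorem Finset.sum_mul_le_add_mul_of_le {α : Type*} (s : Finset α) (p : α → Prop)
    [DecidablePred p] {w f : α → ℝ≥0∞} {A B e : ℝ≥0∞} (hw : ∑ a ∈ s, w a ≤ 1)
    (htail : ∑ a ∈ s with ¬p a, w a ≤ e) (hA : ∀ a ∈ s, p a → f a ≤ A) (hB : ∀ a ∈ s, f a ≤ B) :
    ∑ a ∈ s, w a * f a ≤ A + e * B := by
  rw [← sum_filter_add_sum_filter_not s p]
  gcongr
  · calc ∑ a ∈ s with p a, w a * f a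
        ≤ ∑ a ∈ s with p a, w a * A := by
          gcongr with a ha
          exact hA a (mem_filter.1 ha).1 (mem_filter.1 ha).2
      _ ≤ (∑ a ∈ s, w a) * A := by
          rw [← sum_mul]
          gcongr
          exact filter_subset _ _
      _ ≤ A := mul_le_of_le_one_left' hw
  · calc ∑ a ∈ s with ¬p a, w a * f a
        ≤ ∑ a ∈ s with ¬p a, w a * B := by
          gcongr with a ha
          exact hB a (mem_filter.1 ha).1
      _ ≤ e * B := by
          rw [← sum_mul]
          gcongr

theorem MeasureTheory.Measure.pi_mixture_eq_sum {ι α : Type*} [Fintype ι] [DecidableEq ι]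
    [MeasurableSpace α] (P Q : Measure α) [IsFiniteMeasure P] [IsFiniteMeasure Q]
    {a b : ℝ≥0∞} (ha : a ≠ ∞) (hb : b ≠ ∞) :
    Measure.pi (fun _ : ι => a • P + b • Q) =
      ∑ S : Finset ι, (b ^ #S * a ^ (Fintype.card ι - #S)) •
        Measure.pi (fun i => if i ∈ S then Q else P) := by
  have := P.smul_finite ha
  have := Q.smul_finite hb
  have (S : Finset ι) (i : ι) : SigmaFinite (if i ∈ S then Q else P) := by
    split_ifs <;> infer_instance
  refine Measure.pi_eq fun s _ => ?_
  simp only [Measure.finsetSum_apply, Measure.smul_apply, Measure.pi_pi, Measure.add_apply,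
    smul_eq_mul, add_comm (a * _), Finset.prod_add, powerset_univ]
  refine Finset.sum_congr rfl fun S _ => ?_
  have hsplit :
      ∏ i, (if i ∈ S then Q else P) (s i) = (∏ i ∈ S, Q (s i)) * ∏ i ∈ Sᶜ, P (s i) := by
    rw [← prod_mul_prod_compl S]
    congr 1
    · exact prod_congr rfl fun i hi => by rw [if_pos hi]
    · exact prod_congr rfl fun i hi => by rw [if_neg (mem_compl.1 hi)]
  rw [hsplit, prod_mul_distrib, prod_mul_distrib, prod_const, prod_const, ← compl_eq_univ_sdiff,
    card_compl]
  ring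

theorem lintegral_edist_le_risk {𝒳 Θ : Type*} [MeasurableSpace 𝒳] [PseudoEMetricSpace Θ]
    {n : ℕ} {model : Set (Measure (Fin n → 𝒳))} (est : (Fin n → 𝒳) → Θ) (θ : Θ)
    {μ : Measure (Fin n → 𝒳)} (hμ : μ ∈ model) :
    ∫⁻ x, edist (est x) θ ∂μ ≤ risk model est θ :=
  le_iSup₂_of_le μ hμ le_rfl

theorem huberHC_risk_le_huberHDC_risk_general
    {𝒳 Θ : Type*} [MeasurableSpace 𝒳] [PseudoMetricSpace Θ]
    (P : Θ → Measure 𝒳) (hP : ∀ θ, IsProbabilityMeasure (P θ))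
    (n : ℕ) (est : (Fin n → 𝒳) → Θ)
    (θstar : Θ) (ε : ℝ) (hε0 : 0 < ε) (hε : ε < 1 / 2) :
    risk (huberHC n ε (P θstar)) est θstar ≤
      risk (huberHDC n (2 * ε) (P θstar)) est θstar +
        ENNReal.ofReal (Real.exp (-(n * ε) / 3)) *
          risk (huberHDC n 1 (P θstar)) est θstar := by
  have h1ε : 0 ≤ 1 - ε := by linarith
  have tail : ∑ S : Finset (Fin n) with ¬(#S : ℝ) ≤ 2 * ε * n,
      ENNReal.ofReal ε ^ #S * ENNReal.ofReal (1 - ε) ^ (n - #S) ≤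
        ENNReal.ofReal (Real.exp (-(n * ε) / 3)) := by
    simp only [not_le, ← ENNReal.ofReal_pow hε0.le, ← ENNReal.ofReal_pow h1ε,
      ← ENNReal.ofReal_mul (pow_nonneg hε0.le _)]
    rw [← ENNReal.ofReal_sum_of_nonneg fun _ _ => by positivity]
    refine ENNReal.ofReal_le_ofReal ?_
    simpa using sum_filter_two_mul_card_lt_pow_mul_pow_le_exp (Fin n) hε0.le (by linarith)
  have := hP θstar
  refine iSup₂_le fun μ ⟨Q, hQ, hμ⟩ => ?_
  rw [hμ, Measure.pi_mixture_eq_sum _ _ ENNReal.ofReal_ne_top ENNReal.ofReal_ne_top,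
    lintegral_finsetSum_measure]
  simp only [lintegral_smul_measure, Fintype.card_fin, smul_eq_mul]
  refine sum_mul_le_add_mul_of_le univ (fun S => (#S : ℝ) ≤ 2 * ε * n) ?_ tail
    (fun S _ hS => lintegral_edist_le_risk est θstar ⟨S, hS, Q, hQ, rfl⟩)
    (fun S _ => lintegral_edist_le_risk est θstar ⟨S, ?_, Q, hQ, rfl⟩)
  · rw [Fin.sum_pow_mul_eq_add_pow, ← ENNReal.ofReal_add hε0.le h1ε, add_sub_cancel,
      ENNReal.ofReal_one, one_pow]
  · simpa using S.card_le_univ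

/-- `R^{HC}_{d,n}(ε, θ*, θ̂_n) ≤ R^{HDC}_{d,n}(2ε, θ*, θ̂_n)
      + e^{-nε/3}·R^{HDC}_{d,n}(1, θ*, θ̂_n)`. -/
theorem huberHC_risk_le_huberHDC_risk
    {𝒳 Θ : Type*} [MeasurableSpace 𝒳] [MeasurableSpace Θ] [PseudoMetricSpace Θ]
    (P : Θ → Measure 𝒳) (hP : ∀ θ, IsProbabilityMeasure (P θ))
    (n : ℕ) (est : (Fin n → 𝒳) → Θ) (hest : Measurable est)
    (θstar : Θ) (ε : ℝ) (hε0 : 0 < ε) (hε : ε < 1 / 2) :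
    risk (huberHC n ε (P θstar)) est θstar ≤
      risk (huberHDC n (2 * ε) (P θstar)) est θstar +
        ENNReal.ofReal (Real.exp (-(n * ε) / 3)) *
          risk (huberHDC n 1 (P θstar)) est θstar :=
  huberHC_risk_le_huberHDC_risk_general P hP n est θstar ε hε0 hε
end
end

section
/- Let Y_1,…,Y_n be i.i.d. random vectors taking values in the probability simplex Δ^{k-1} whose mean θ* = E[Y_1] has at most s nonzero coordinates (s ≥ 1), and let Ȳ_n := (1/n) Σ_{i=1}^n Y_i. Then E[d_H²(Ȳ_n, θ*)] ≤ (s − 1)/n, and consequently E[d_H(Ȳ_n, θ*)] ≤ (s/n)^{1/2}. -/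
/-
Since `(√a - √b)² ≤ (a - b)² / b`, the squared Hellinger distance `d_H²(Ȳ, θ)` is dominated by
the χ²-divergence `∑ⱼ (Ȳⱼ - θⱼ)² / θⱼ` over the support of `θ` (off the support `Ȳⱼ = 0` almost
surely, its mean being `0`). In expectation the `j`-th term is `Var(Ȳⱼ) / θⱼ`. The coordinates
`Yᵢⱼ` lie in `[0, 1]` and have mean `θⱼ`, so the Bhatia–Davis inequality gives
`Var(Yᵢⱼ) ≤ θⱼ(1 - θⱼ)`, and independence gives `Var(Ȳⱼ) ≤ θⱼ(1 - θⱼ)/n`. Summing `(1 - θⱼ)/n`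
over the at most `s` indices of the support, where the `θⱼ` add up to `1`, gives `(s - 1)/n`.
The bound on `E[d_H]` then follows from `(E X)² ≤ E[X²]`.
-/

open MeasureTheory ProbabilityTheory

noncomputable section

/-- Hellinger distance between two points of the simplex. -/
def dH {k : ℕ} (u v : Fin k → ℝ) : ℝ :=
  Real.sqrt (∑ j, (Real.sqrt (u j) - Real.sqrt (v j)) ^ 2)

open Finset

lemma sqrt_sub_sqrt_sq_le_sq_sub_div {a b : ℝ} (ha : 0 ≤ a) (hb : 0 < b) :
    (√a - √b) ^ 2 ≤ (a - b) ^ 2 / b := by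
  have hfactor : (a - b) ^ 2 = (√a - √b) ^ 2 * (√a + √b) ^ 2 := by
    rw [← mul_pow, mul_comm, ← sq_sub_sq, Real.sq_sqrt ha, Real.sq_sqrt hb.le]
  have hb_le : b ≤ (√a + √b) ^ 2 := by
    nlinarith [Real.sq_sqrt hb.le, Real.sqrt_nonneg a, Real.sqrt_nonneg b]
  rw [le_div_iff₀ hb, hfactor]
  exact mul_le_mul_of_nonneg_left hb_le (sq_nonneg _)

lemma sqrt_sub_sqrt_sq_le_add {a b : ℝ} (ha : 0 ≤ a) (hb : 0 ≤ b) :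
    (√a - √b) ^ 2 ≤ a + b := by
  nlinarith [Real.sq_sqrt ha, Real.sq_sqrt hb, Real.sqrt_nonneg a, Real.sqrt_nonneg b]

lemma simplex_eq_stdSimplex (k : ℕ) : simplex k = stdSimplex ℝ (Fin k) := rfl

lemma sampleMean_mem_simplex_s14 {k n : ℕ} (hn : n ≠ 0) {y : Fin n → Fin k → ℝ}
    (hy : ∀ i, y i ∈ simplex k) : (fun j => (1 / n : ℝ) * ∑ i, y i j) ∈ simplex k := by
  rw [simplex_eq_stdSimplex]
  have hmem := (convex_stdSimplex ℝ (Fin k)).sum_mem (t := univ) (w := fun _ => (1 / n : ℝ))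
    (fun _ _ => by positivity) (by simp [hn]) fun i _ => hy i
  convert hmem using 1
  ext j
  simp [Finset.sum_apply, mul_sum]

lemma dH_sq {k : ℕ} (u v : Fin k → ℝ) : dH u v ^ 2 = ∑ j, (√(u j) - √(v j)) ^ 2 :=
  Real.sq_sqrt (sum_nonneg fun _ _ => sq_nonneg _)

lemma continuous_dH_left {k : ℕ} (v : Fin k → ℝ) : Continuous fun u => dH u v := by
  unfold dH
  fun_prop

lemma dH_le_sqrt_two {k : ℕ} {u v : Fin k → ℝ} (hu : u ∈ simplex k) (hv : v ∈ simplex k) :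
    dH u v ≤ √2 := by
  refine Real.sqrt_le_sqrt ?_
  calc ∑ j, (√(u j) - √(v j)) ^ 2 ≤ ∑ j, (u j + v j) :=
        sum_le_sum fun j _ => sqrt_sub_sqrt_sq_le_add (hu.1 j) (hv.1 j)
    _ = 2 := by rw [sum_add_distrib, hu.2, hv.2]; norm_num

/-- The terms with `v j = 0` vanish on both sides, on the right because `x / 0 = 0`. -/
lemma dH_sq_le_sum_sq_sub_div {k : ℕ} {u v : Fin k → ℝ} (hu : ∀ j, 0 ≤ u j)
    (hv : ∀ j, 0 ≤ v j) (hsupp : ∀ j, v j = 0 → u j = 0) :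
    dH u v ^ 2 ≤ ∑ j, (u j - v j) ^ 2 / v j := by
  rw [dH_sq]
  refine sum_le_sum fun j _ => ?_
  rcases (hv j).eq_or_lt with hvj | hvj
  · simp [← hvj, hsupp j hvj.symm]
  · exact sqrt_sub_sqrt_sq_le_sq_sub_div (hu j) hvj

lemma sum_mul_one_sub_mul_div_self {ι : Type*} [Fintype ι] {p : ι → ℝ} (hp : ∑ i, p i = 1)
    (c : ℝ) : ∑ i, p i * (1 - p i) * c / p i = (#{i | p i ≠ 0} - 1) * c := by
  have hterm i : p i * (1 - p i) * c / p i = if p i ≠ 0 then (1 - p i) * c else 0 := by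
    split_ifs with hpi
    · field_simp
    · simp_all
  simp_rw [hterm, ← sum_filter, ← sum_mul, sum_sub_distrib, sum_filter_ne_zero, hp,
    sum_const, nsmul_eq_mul, mul_one]

section Probability

variable {Ω : Type*} [MeasurableSpace Ω] {μ : Measure Ω}

lemma integral_sampleMean {n : ℕ} (hn : n ≠ 0) {X : Fin n → Ω → ℝ} {m : ℝ}
    (hint : ∀ i, Integrable (X i) μ) (hmean : ∀ i, ∫ ω, X i ω ∂μ = m) :
    ∫ ω, (1 / n : ℝ) * ∑ i, X i ω ∂μ = m := by
  rw [integral_const_mul, integral_finsetSum _ fun i _ => hint i]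
  simp [hmean, hn]

variable [IsProbabilityMeasure μ]

lemma sq_integral_le_integral_sq {F : Ω → ℝ} (hF : MemLp F 2 μ) :
    (∫ ω, F ω ∂μ) ^ 2 ≤ ∫ ω, F ω ^ 2 ∂μ := by
  have := variance_nonneg F μ
  rw [variance_eq_sub hF] at this
  simpa [sub_nonneg] using this

lemma variance_sampleMean_le {n : ℕ} {X : Fin n → Ω → ℝ} {m : ℝ}
    (hX : ∀ i, AEMeasurable (X i) μ) (hindep : Pairwise fun i j => X i ⟂ᵢ[μ] X j)
    (hX01 : ∀ i, ∀ᵐ ω ∂μ, X i ω ∈ Set.Icc 0 1) (hmean : ∀ i, ∫ ω, X i ω ∂μ = m) :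
    Var[fun ω => (1 / n : ℝ) * ∑ i, X i ω; μ] ≤ m * (1 - m) * (1 / n) := by
  have hL2 i : MemLp (X i) 2 μ := memLp_of_bounded (hX01 i) (hX i).aestronglyMeasurable 2
  have hvar i : Var[X i; μ] ≤ m * (1 - m) := by
    have := variance_le_sub_mul_sub (hX01 i) (hX i)
    rw [hmean i] at this
    linarith
  have hsum : Var[fun ω => ∑ i, X i ω; μ] = ∑ i, Var[X i; μ] := by
    rw [← IndepFun.variance_sum (fun i _ => hL2 i) fun i _ j _ hij => hindep hij]
    congr 1
    ext ω
    simp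
  calc Var[fun ω => (1 / n : ℝ) * ∑ i, X i ω; μ] = (1 / n) ^ 2 * ∑ i, Var[X i; μ] := by
        rw [← hsum]
        exact variance_const_mul _ _ _
    _ ≤ (1 / n) ^ 2 * (n * (m * (1 - m))) := by
        gcongr
        simpa using sum_le_sum fun i (_ : i ∈ univ) => hvar i
    _ = m * (1 - m) * (1 / n) := by
        rcases n.eq_zero_or_pos with rfl | hn
        · simp
        · field_simp

variable {k : ℕ} {Z : Ω → Fin k → ℝ}

lemma memLp_apply_of_mem_simplex (hZ : AEMeasurable Z μ) (hZs : ∀ᵐ ω ∂μ, Z ω ∈ simplex k)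
    (j : Fin k) (p : ENNReal) : MemLp (fun ω => Z ω j) p μ :=
  memLp_of_bounded (hZs.mono fun _ h => mem_Icc_of_mem_stdSimplex h j)
    (hZ.eval j).aestronglyMeasurable p

lemma integral_apply_mem_simplex (hZ : AEMeasurable Z μ) (hZs : ∀ᵐ ω ∂μ, Z ω ∈ simplex k) :
    (fun j => ∫ ω, Z ω j ∂μ) ∈ simplex k := by
  have hint j := (memLp_apply_of_mem_simplex hZ hZs j 1).integrable le_rfl
  refine ⟨fun j => integral_nonneg_of_ae (hZs.mono fun _ h => h.1 j), ?_⟩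
  rw [← integral_finsetSum _ fun j _ => hint j, integral_congr_ae (hZs.mono fun _ h => h.2)]
  simp

lemma ae_apply_eq_zero_of_integral_eq_zero (hZ : AEMeasurable Z μ)
    (hZs : ∀ᵐ ω ∂μ, Z ω ∈ simplex k) {j : Fin k} (hj : ∫ ω, Z ω j ∂μ = 0) :
    ∀ᵐ ω ∂μ, Z ω j = 0 :=
  (integral_eq_zero_iff_of_nonneg_ae (hZs.mono fun _ h => h.1 j)
    ((memLp_apply_of_mem_simplex hZ hZs j 1).integrable le_rfl)).1 hj

theorem integral_dH_sq_le {θ : Fin k → ℝ} {c : ℝ} (hZ : AEMeasurable Z μ)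
    (hZs : ∀ᵐ ω ∂μ, Z ω ∈ simplex k) (hmean : ∀ j, ∫ ω, Z ω j ∂μ = θ j)
    (hvar : ∀ j, Var[fun ω => Z ω j; μ] ≤ θ j * (1 - θ j) * c) :
    ∫ ω, dH (Z ω) θ ^ 2 ∂μ ≤ (#{j | θ j ≠ 0} - 1) * c := by
  have hθ : θ ∈ simplex k := funext hmean ▸ integral_apply_mem_simplex hZ hZs
  have hsupp : ∀ᵐ ω ∂μ, ∀ j, θ j = 0 → Z ω j = 0 := by
    refine ae_all_iff.2 fun j => ?_
    by_cases hj : θ j = 0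
    · filter_upwards [ae_apply_eq_zero_of_integral_eq_zero hZ hZs ((hmean j).trans hj)]
        with ω h using fun _ => h
    · exact ae_of_all _ fun _ h => absurd h hj
  have hterm_int j : Integrable (fun ω => (Z ω j - θ j) ^ 2 / θ j) μ :=
    (((memLp_apply_of_mem_simplex hZ hZs j 2).sub (memLp_const _)).integrable_sq).div_const _
  calc ∫ ω, dH (Z ω) θ ^ 2 ∂μ ≤ ∫ ω, ∑ j, (Z ω j - θ j) ^ 2 / θ j ∂μ := by
        refine integral_mono_of_nonneg (ae_of_all _ fun _ => sq_nonneg _)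
          (integrable_finsetSum _ fun j _ => hterm_int j) ?_
        filter_upwards [hZs, hsupp] with ω hω hωsupp
        exact dH_sq_le_sum_sq_sub_div hω.1 hθ.1 hωsupp
    _ = ∑ j, Var[fun ω => Z ω j; μ] / θ j := by
        rw [integral_finsetSum _ fun j _ => hterm_int j]
        refine sum_congr rfl fun j _ => ?_
        rw [integral_div, variance_eq_integral (hZ.eval j), hmean]
    _ ≤ ∑ j, θ j * (1 - θ j) * c / θ j :=
        sum_le_sum fun j _ => div_le_div_of_nonneg_right (hvar j) (hθ.1 j)
    _ = (#{j | θ j ≠ 0} - 1) * c := sum_mul_one_sub_mul_div_self hθ.2 c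

lemma integral_dH_le_sqrt_integral_dH_sq {θ : Fin k → ℝ} (hZ : AEMeasurable Z μ)
    (hZs : ∀ᵐ ω ∂μ, Z ω ∈ simplex k) (hθ : θ ∈ simplex k) :
    ∫ ω, dH (Z ω) θ ∂μ ≤ √(∫ ω, dH (Z ω) θ ^ 2 ∂μ) := by
  have hL2 : MemLp (fun ω => dH (Z ω) θ) 2 μ :=
    memLp_of_bounded (hZs.mono fun _ h => ⟨Real.sqrt_nonneg _, dH_le_sqrt_two h hθ⟩)
      ((continuous_dH_left θ).measurable.comp_aemeasurable hZ).aestronglyMeasurable 2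
  exact (le_abs_self _).trans (Real.abs_le_sqrt (sq_integral_le_integral_sq hL2))

end Probability

theorem sample_mean_Hellinger_risk_iid_general
    {Ω : Type} [MeasurableSpace Ω] (μ : Measure Ω) [IsProbabilityMeasure μ]
    (k s n : ℕ) (hn : 1 ≤ n)
    (Y : Fin n → Ω → Fin k → ℝ)
    (hYmeas : ∀ i, Measurable (Y i))
    (hYindep : iIndepFun Y μ)
    (hYval : ∀ i ω, Y i ω ∈ simplex k)
    (θ : Fin k → ℝ) (hθmean : ∀ i j, ∫ ω, Y i ω j ∂μ = θ j)
    (hθsparse : sparse s θ) :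
    (∫ ω, dH (fun j => (1 / n : ℝ) * ∑ i, Y i ω j) θ ^ 2 ∂μ ≤ ((s : ℝ) - 1) / n) ∧
      ∫ ω, dH (fun j => (1 / n : ℝ) * ∑ i, Y i ω j) θ ∂μ ≤ Real.sqrt (s / n) := by
  have hn0 : n ≠ 0 := by omega
  set Ybar : Ω → Fin k → ℝ := fun ω j => (1 / n : ℝ) * ∑ i, Y i ω j
  have hYbar : AEMeasurable Ybar μ := by fun_prop
  have hYbar_mem : ∀ᵐ ω ∂μ, Ybar ω ∈ simplex k :=
    ae_of_all _ fun ω => sampleMean_mem_simplex_s14 hn0 fun i => hYval i ω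
  have hcoord_mem i : ∀ᵐ ω ∂μ, Y i ω ∈ simplex k := ae_of_all _ (hYval i)
  have hmean j : ∫ ω, Ybar ω j ∂μ = θ j :=
    integral_sampleMean hn0 (fun i => (memLp_apply_of_mem_simplex (hYmeas i).aemeasurable
      (hcoord_mem i) j 1).integrable le_rfl) fun i => hθmean i j
  have hvar j : Var[fun ω => Ybar ω j; μ] ≤ θ j * (1 - θ j) * (1 / n) :=
    variance_sampleMean_le (fun i => (hYmeas i).aemeasurable.eval j)
      (fun i i' hii' => (hYindep.comp _ fun _ => measurable_pi_apply j).indepFun hii')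
      (fun i => (hcoord_mem i).mono fun ω h => mem_Icc_of_mem_stdSimplex h j)
      fun i => hθmean i j
  have hrisk : ∫ ω, dH (Ybar ω) θ ^ 2 ∂μ ≤ ((s : ℝ) - 1) / n := by
    refine (integral_dH_sq_le hYbar hYbar_mem hmean hvar).trans ?_
    rw [mul_one_div]
    gcongr
    exact_mod_cast hθsparse
  have hθ : θ ∈ simplex k := funext hmean ▸ integral_apply_mem_simplex hYbar hYbar_mem
  refine ⟨hrisk, (integral_dH_le_sqrt_integral_dH_sq hYbar hYbar_mem hθ).trans ?_⟩
  exact Real.sqrt_le_sqrt (hrisk.trans (by gcongr; linarith))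

/-- For i.i.d. simplex-valued observations with an `s`-sparse mean,
`E[d_H²(Ȳ_n, θ*)] ≤ (s-1)/n` and hence `E[d_H(Ȳ_n, θ*)] ≤ (s/n)^{1/2}`. -/
theorem sample_mean_Hellinger_risk_iid
    {Ω : Type} [MeasurableSpace Ω] (μ : Measure Ω) [IsProbabilityMeasure μ]
    (k s n : ℕ) (hk : 1 ≤ k) (hs1 : 1 ≤ s) (hn : 1 ≤ n)
    (Y : Fin n → Ω → Fin k → ℝ)
    (hYmeas : ∀ i, Measurable (Y i))
    (hYindep : iIndepFun Y μ)
    (hYid : ∀ i j, IdentDistrib (Y i) (Y j) μ μ)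
    (hYval : ∀ i ω, Y i ω ∈ simplex k)
    (θ : Fin k → ℝ) (hθmean : ∀ i j, ∫ ω, Y i ω j ∂μ = θ j)
    (hθsparse : sparse s θ) :
    (∫ ω, dH (fun j => (1 / n : ℝ) * ∑ i, Y i ω j) θ ^ 2 ∂μ ≤ ((s : ℝ) - 1) / n) ∧
      ∫ ω, dH (fun j => (1 / n : ℝ) * ∑ i, Y i ω j) θ ∂μ ≤ Real.sqrt (s / n) :=
  sample_mean_Hellinger_risk_iid_general μ k s n hn Y hYmeas hYindep hYval θ hθmean hθsparse
end
end
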